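/- arXiv:1808.10151 — 2 statements merged into one kernel-verified Lean document; each statement's English description precedes it below -/
import Mathlib

section
/- Let $\ell \geq 1$ and let $x, y < 2^{\ell}$ be natural numbers with bits $x_i, y_i \in \mathbb{Z}/2\mathbb{Z}$ for $0 \le i < \ell$. Define in $\mathbb{Z}/2\mathbb{Z}$: $c_i = y_i(1 - x_i)\prod_{j=i+1}^{\ell-1}(x_j + y_j + 1)$ and $w = 1 + \sum_{i=0}^{\ell-1} c_i$. Then $w = 1$ if and only if $x \geq y$, and $w = 0$ if and only if $x < y$. (This is the correctness of the secure distributed comparison protocol $\pi_{DC}$.) -/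
/-!
Write `S_n(x, y) = ∑_{i<n} d_i ∏_{i<j<n} e_j` with `d_i = y_i (1 - x_i)` and `e_j = x_j + y_j + 1`.
Peeling off the top index gives `S_{n+1} = S_n e_n + d_n`, where `e_n` indicates `x_n = y_n` and
`d_n` indicates `y_n > x_n`. This is the lexicographic recursion for comparing the lowest `n + 1`
bits of `x` and `y`, so `S_n(x, y)` is the indicator of `x mod 2^n < y mod 2^n`, and `w = 1 + S_ℓ`.
-/

/-- The `i`-th binary digit of a natural number, embedded into `ℤ/2ℤ`. -/
def natBit (n i : ℕ) : ZMod 2 := if n.testBit i then 1 else 0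

theorem Finset.sum_mul_prod_Ico_succ_top {R : Type*} [CommSemiring R] (d e : ℕ → R) (n : ℕ) :
    ∑ i ∈ range (n + 1), d i * ∏ j ∈ Ico (i + 1) (n + 1), e j =
      (∑ i ∈ range n, d i * ∏ j ∈ Ico (i + 1) n, e j) * e n + d n := by
  rw [sum_range_succ, Ico_self, prod_empty, mul_one, sum_mul]
  congr 1
  refine sum_congr rfl fun i hi => ?_
  rw [prod_Ico_succ_top (by simpa using hi), mul_assoc]

theorem Nat.mod_two_pow_succ_lt_mod_two_pow_succ_iff {x y n : ℕ} :
    x % 2 ^ (n + 1) < y % 2 ^ (n + 1) ↔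
      (y.testBit n ∧ ¬x.testBit n) ∨ (x.testBit n = y.testBit n ∧ x % 2 ^ n < y % 2 ^ n) := by
  have hx : x % 2 ^ n < 2 ^ n := mod_lt _ (by positivity)
  have hy : y % 2 ^ n < 2 ^ n := mod_lt _ (by positivity)
  rw [mod_pow_succ, mod_pow_succ, ← toNat_testBit, ← toNat_testBit]
  cases x.testBit n <;> cases y.testBit n <;> simp <;> omega

theorem natBit_mul_one_sub_natBit (x y n : ℕ) :
    natBit y n * (1 - natBit x n) = if y.testBit n ∧ ¬x.testBit n then 1 else 0 := by
  unfold natBit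
  cases x.testBit n <;> cases y.testBit n <;> decide

theorem natBit_add_natBit_add_one (x y n : ℕ) :
    natBit x n + natBit y n + 1 = if x.testBit n = y.testBit n then 1 else 0 := by
  unfold natBit
  cases x.testBit n <;> cases y.testBit n <;> decide

theorem comparison_sum_eq_ite_mod_lt (x y ℓ : ℕ) :
    ∑ i ∈ Finset.range ℓ, natBit y i * (1 - natBit x i) *
        ∏ j ∈ Finset.Ico (i + 1) ℓ, (natBit x j + natBit y j + 1) =
      if x % 2 ^ ℓ < y % 2 ^ ℓ then 1 else 0 := by
  induction ℓ with
  | zero => simp [Nat.mod_one]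
  | succ n ih =>
    rw [Finset.sum_mul_prod_Ico_succ_top, ih, natBit_mul_one_sub_natBit,
      natBit_add_natBit_add_one]
    simp only [Nat.mod_two_pow_succ_lt_mod_two_pow_succ_iff]
    cases x.testBit n <;> cases y.testBit n <;> by_cases h : x % 2 ^ n < y % 2 ^ n <;> simp [h]

theorem secure_comparison_correct_general (ℓ : ℕ)
    (x y : ℕ) (hx : x < 2 ^ ℓ) (hy : y < 2 ^ ℓ)
    (c : ℕ → ZMod 2)
    (hc : ∀ i, c i = natBit y i * (1 - natBit x i) *
        ∏ j ∈ Finset.Ico (i + 1) ℓ, (natBit x j + natBit y j + 1))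
    (w : ZMod 2) (hw : w = 1 + ∑ i ∈ Finset.range ℓ, c i) :
    (w = 1 ↔ y ≤ x) ∧ (w = 0 ↔ x < y) := by
  simp only [hc, comparison_sum_eq_ite_mod_lt, Nat.mod_eq_of_lt hx, Nat.mod_eq_of_lt hy] at hw
  subst hw
  rcases lt_or_ge x y with h | h
  · rw [if_pos h]
    exact ⟨iff_of_false (by decide) h.not_ge, iff_of_true (by decide) h⟩
  · rw [if_neg h.not_gt, add_zero]
    exact ⟨iff_of_true rfl h, iff_of_false one_ne_zero h.not_gt⟩

/-- Correctness of the secure distributed comparison protocol `π_DC`: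
with `c_i = y_i (1 - x_i) ∏_{j=i+1}^{ℓ-1} (x_j + y_j + 1)` and
`w = 1 + ∑_{i<ℓ} c_i` (arithmetic in `ℤ/2ℤ`), one has `w = 1` iff `x ≥ y`
and `w = 0` iff `x < y`. -/
theorem secure_comparison_correct (ℓ : ℕ) (hℓ : 1 ≤ ℓ)
    (x y : ℕ) (hx : x < 2 ^ ℓ) (hy : y < 2 ^ ℓ)
    (c : ℕ → ZMod 2)
    (hc : ∀ i, c i = natBit y i * (1 - natBit x i) *
        ∏ j ∈ Finset.Ico (i + 1) ℓ, (natBit x j + natBit y j + 1))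
    (w : ZMod 2) (hw : w = 1 + ∑ i ∈ Finset.range ℓ, c i) :
    (w = 1 ↔ y ≤ x) ∧ (w = 0 ↔ x < y) :=
  secure_comparison_correct_general ℓ x y hx hy c hc w hw
end

section
/- Let $\ell \geq 1$, let $z < 2^{\ell}$ be a natural number, and let $z_A, z_B \in \mathbb{Z}/2^{\ell}\mathbb{Z}$ be any additive shares of $z$, i.e., $z_A + z_B = z$ in $\mathbb{Z}/2^{\ell}\mathbb{Z}$. Let $a, b < 2^{\ell}$ be the natural-number representatives of $z_A, z_B$, with bits $a_i, b_i \in \mathbb{Z}/2\mathbb{Z}$. Define in $\mathbb{Z}/2\mathbb{Z}$: $y_i = a_i + b_i$, $c_0 = a_0 b_0$, $c_i = (y_i c_{i-1} + 1)(a_i b_i + 1) + 1$ for $1 \le i < \ell$, and $x_0 = y_0$, $x_i = y_i + c_{i-1}$ for $1 \le i < \ell$. Then for every $i < \ell$, $x_i$ equals the $i$-th binary digit of $z$. (Applying the bit-decomposition recursion to the representatives of any additive sharing of $z$ over $\mathbb{Z}/2^{\ell}\mathbb{Z}$ recovers exactly the bits of $z$.) -/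
/-- The carries of the bit-decomposition protocol `π_Decomp` applied to the
natural numbers `a` and `b`: `c_0 = a_0 b_0` and
`c_i = ((a_i + b_i) c_{i-1} + 1)(a_i b_i + 1) + 1` (arithmetic in `ℤ/2ℤ`). -/
def decompCarry (a b : ℕ) : ℕ → ZMod 2
  | 0 => natBit a 0 * natBit b 0
  | i + 1 =>
      ((natBit a (i + 1) + natBit b (i + 1)) * decompCarry a b i + 1) *
          (natBit a (i + 1) * natBit b (i + 1) + 1) + 1

/-- The output bits of the bit-decomposition protocol `π_Decomp`:
`x_0 = a_0 + b_0` and `x_i = a_i + b_i + c_{i-1}` (arithmetic in `ℤ/2ℤ`). -/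
def decompBit (a b : ℕ) : ℕ → ZMod 2
  | 0 => natBit a 0 + natBit b 0
  | i + 1 => natBit a (i + 1) + natBit b (i + 1) + decompCarry a b i

/-! Since `z ≡ a + b (mod 2^ℓ)`, the low `ℓ` bits of `z` are those of `a + b`. The protocol is
ripple-carry addition over `𝔽₂`: by induction, `c_i` is the carry out of bit `i` of `a + b`, namely
`⌊(a mod 2^(i+1) + b mod 2^(i+1)) / 2^(i+1)⌋`, and then `x_i = a_i + b_i + c_{i-1}` is bit `i` of
`a + b`. -/

def addCarry (a b i : ℕ) : ℕ := (a % 2 ^ i + b % 2 ^ i) / 2 ^ i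

lemma natBit_eq_natCast_div (n i : ℕ) : natBit n i = ((n / 2 ^ i : ℕ) : ZMod 2) := by
  rw [natBit, Nat.testBit_eq_decide_div_mod_eq, ← ZMod.natCast_mod]
  rcases Nat.mod_two_eq_zero_or_one (n / 2 ^ i) with h | h <;> simp [h]

lemma natBit_mod_two_pow {n ℓ i : ℕ} (hi : i < ℓ) : natBit (n % 2 ^ ℓ) i = natBit n i := by
  simp [natBit, hi]

lemma add_div_two_pow (a b i : ℕ) :
    (a + b) / 2 ^ i = a / 2 ^ i + b / 2 ^ i + addCarry a b i := by
  have hsplit : a + b = 2 ^ i * (a / 2 ^ i + b / 2 ^ i) + (a % 2 ^ i + b % 2 ^ i) := by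
    have := Nat.div_add_mod a (2 ^ i)
    have := Nat.div_add_mod b (2 ^ i)
    rw [Nat.mul_add]; omega
  rw [hsplit, Nat.mul_add_div (Nat.two_pow_pos i), addCarry, Nat.add_assoc]

lemma natBit_add (a b i : ℕ) :
    natBit (a + b) i = natBit a i + natBit b i + addCarry a b i := by
  simp only [natBit_eq_natCast_div, add_div_two_pow, Nat.cast_add]

lemma addCarry_zero (a b : ℕ) : addCarry a b 0 = 0 := by
  simp [addCarry, Nat.mod_one]

lemma addCarry_succ (a b i : ℕ) :
    addCarry a b (i + 1) = (a / 2 ^ i % 2 + b / 2 ^ i % 2 + addCarry a b i) / 2 := by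
  have hsum : a % 2 ^ (i + 1) + b % 2 ^ (i + 1) =
      (a % 2 ^ i + b % 2 ^ i) + 2 ^ i * (a / 2 ^ i % 2 + b / 2 ^ i % 2) := by
    rw [Nat.mod_pow_succ, Nat.mod_pow_succ, Nat.mul_add]; omega
  rw [addCarry, hsum, pow_succ, ← Nat.div_div_eq_div_mul,
    Nat.add_mul_div_left _ _ (Nat.two_pow_pos i), addCarry, Nat.add_comm]

lemma addCarry_lt_two (a b i : ℕ) : addCarry a b i < 2 := by
  have ha := Nat.mod_lt a (Nat.two_pow_pos i)
  have hb := Nat.mod_lt b (Nat.two_pow_pos i)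
  rw [addCarry, Nat.div_lt_iff_lt_mul (Nat.two_pow_pos i)]
  omega

/-- Over `𝔽₂`, `((x + y) c + 1)(x y + 1) + 1` is `(x + y) c ∨ x y`, the majority of `x, y, c`. -/
lemma natCast_majority {x y c : ℕ} (hx : x < 2) (hy : y < 2) (hc : c < 2) :
    (((x + y + c) / 2 : ℕ) : ZMod 2) =
      ((x + y) * c + 1) * (x * y + 1) + 1 := by
  interval_cases x <;> interval_cases y <;> interval_cases c <;> decide

lemma decompCarry_eq_addCarry (a b i : ℕ) : decompCarry a b i = addCarry a b (i + 1) := by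
  induction i with
  | zero =>
    rw [decompCarry, addCarry_succ, addCarry_zero,
      natCast_majority (Nat.mod_lt _ two_pos) (Nat.mod_lt _ two_pos) two_pos]
    simp [natBit_eq_natCast_div, ZMod.natCast_mod, add_assoc, CharTwo.add_self_eq_zero]
  | succ i ih =>
    rw [decompCarry, ih, addCarry_succ a b (i + 1), natCast_majority (Nat.mod_lt _ two_pos)
      (Nat.mod_lt _ two_pos) (addCarry_lt_two a b _)]
    simp only [natBit_eq_natCast_div, ZMod.natCast_mod]

lemma decompBit_eq_natBit_add (a b i : ℕ) : decompBit a b i = natBit (a + b) i := by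
  cases i with
  | zero => simp [decompBit, natBit_add, addCarry_zero]
  | succ i => rw [decompBit, natBit_add, decompCarry_eq_addCarry]

theorem bit_decomposition_of_shares_correct_general (ℓ : ℕ)
    (z : ℕ) (hz : z < 2 ^ ℓ)
    (zA zB : ZMod (2 ^ ℓ)) (hshare : zA + zB = (z : ZMod (2 ^ ℓ)))
    (a b : ℕ) (ha : a = zA.val) (hb : b = zB.val) :
    ∀ i, i < ℓ → decompBit a b i = natBit z i := by
  intro i hi
  have hz_eq : z = (a + b) % 2 ^ ℓ := by
    rw [ha, hb, ← ZMod.val_add, hshare, ZMod.val_natCast_of_lt hz]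
  rw [hz_eq, natBit_mod_two_pow hi, decompBit_eq_natBit_add]

/-- Applying the bit-decomposition recursion of `π_Decomp` to the natural
number representatives of any additive sharing `(z_A, z_B)` of `z` over
`ℤ/2^ℓℤ` recovers exactly the binary digits of `z`. -/
theorem bit_decomposition_of_shares_correct (ℓ : ℕ) (hℓ : 1 ≤ ℓ)
    (z : ℕ) (hz : z < 2 ^ ℓ)
    (zA zB : ZMod (2 ^ ℓ)) (hshare : zA + zB = (z : ZMod (2 ^ ℓ)))
    (a b : ℕ) (ha : a = zA.val) (hb : b = zB.val) :
    ∀ i, i < ℓ → decompBit a b i = natBit z i :=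
  bit_decomposition_of_shares_correct_general ℓ z hz zA zB hshare a b ha hb
end
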